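/- For every m : ℕ, 21·natDegree((X+1)·(F m).num − X·(F m).denom) = 23·2^m + t(m), as an identity in ℤ, where t(m) = 19, 17, 13, 26, 10, 20 according as m ≡ 0, 1, 2, 3, 4, 5 (mod 6). -/

import Mathlib

/-!
Write `F m = p m / q m` with `p m`, `q m` coprime. Then `F (m + 1) = (p - X q) (p - q) / p²`, and
since `p - X q ≡ -X q` and `p - q ≡ -q` modulo `p`, the only factor that can cancel is a power of
`X`, which happens exactly when `X ∣ p m`. At the parameter `a = 0` the critical point `0` of `h_0`
has period three (`0 ↦ ∞ ↦ 1 ↦ 0`), and following the first two Taylor coefficients of `F m` at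
`X = 0` shows that exactly one factor `X` cancels when `3 ∣ m` and none otherwise. At infinity
`F m` alternates between a finite limit different from `1` and a simple pole, so
`deg p (m + 1) = 2 deg p m + 1 - (m mod 2) - [3 ∣ m]` and `(X + 1) p m - X q m` has degree
`deg p m + 1`; solving this recursion gives the formula. The two generic coincidences that could
spoil the argument are excluded because `x² + x - 1` and `x² - x + 1` have no rational roots.
-/

noncomputable def F : ℕ → RatFunc ℚ
  | 0 => (2 * RatFunc.X) / (RatFunc.X + 1)
  | (m + 1) => ((F m - RatFunc.X) * (F m - 1)) / (F m) ^ 2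

open Polynomial

theorem IsCoprime.gcd_eq_one {α : Type*} [CommRing α] [IsDomain α] [NormalizedGCDMonoid α]
    {a b : α} (h : IsCoprime a b) : gcd a b = 1 := by
  rw [← normalize_gcd, normalize_eq_one]
  exact h.isUnit_of_dvd' (gcd_dvd_left a b) (gcd_dvd_right a b)

namespace RatFunc

variable {K : Type*} [Field K]

theorem num_div_eq_of_isCoprime {p q : K[X]} (h : IsCoprime p q) :
    (algebraMap K[X] (RatFunc K) p / algebraMap K[X] (RatFunc K) q).num =
      Polynomial.C q.leadingCoeff⁻¹ * p := by
  classical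
  rw [num_div, h.gcd_eq_one, EuclideanDomain.div_one, EuclideanDomain.div_one]

theorem denom_div_eq_of_isCoprime {p q : K[X]} (hq : q ≠ 0) (h : IsCoprime p q) :
    (algebraMap K[X] (RatFunc K) p / algebraMap K[X] (RatFunc K) q).denom =
      Polynomial.C q.leadingCoeff⁻¹ * q := by
  classical
  rw [denom_div _ hq, h.gcd_eq_one, EuclideanDomain.div_one]

end RatFunc

theorem Rat.sq_add_mul_sub_sq_ne_zero {a b : ℚ} (hb : b ≠ 0) : a ^ 2 + a * b - b ^ 2 ≠ 0 := by
  intro h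
  have h5 : IsSquare (5 : ℚ) := ⟨(2 * a + b) / b, by field_simp; linear_combination (-4) * h⟩
  norm_num at h5

theorem sq_sub_mul_add_sq_ne_zero {K : Type*} [Field K] [LinearOrder K] [IsStrictOrderedRing K]
    {a b : K} (hb : b ≠ 0) : a ^ 2 - a * b + b ^ 2 ≠ 0 := by
  have := sq_pos_of_ne_zero hb
  nlinarith [sq_nonneg (2 * a - b)]

section Coprime

variable {R : Type*} [CommRing R]

theorem IsCoprime.sub_self_left {x y : R} (h : IsCoprime y x) : IsCoprime (x - y) x := by
  simpa using (IsCoprime.mul_sub_right_left_iff (z := 1)).mpr h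

theorem isCoprime_sub_mul_mul_sub_sq {p q x : R} (hpq : IsCoprime p q) (hx : IsCoprime x p) :
    IsCoprime ((p - x * q) * (p - q)) (p ^ 2) :=
  ((hx.mul_left hpq.symm).sub_self_left.mul_left hpq.symm.sub_self_left).pow_right

theorem isCoprime_sub_mul_sub_of_eq_mul {p q x u : R} (hp : p = x * u) (hpq : IsCoprime p q)
    (hux : IsCoprime (u - q) x) (hpx : IsCoprime (p - q) x) :
    IsCoprime ((u - q) * (p - q)) (x * u ^ 2) := by
  have huq : IsCoprime u q := (hp ▸ hpq).of_mul_left_right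
  have hpu : IsCoprime (p - q) u := hp ▸ IsCoprime.mul_sub_right_left_iff.mpr huq.symm
  exact (hux.mul_left hpx).mul_right (huq.symm.sub_self_left.mul_left hpu).pow_right

end Coprime

theorem Polynomial.isCoprime_X_of_coeff_zero_ne_zero {K : Type*} [Field K] {f : K[X]}
    (h : f.coeff 0 ≠ 0) : IsCoprime X f :=
  irreducible_X.coprime_iff_not_dvd.mpr (by rwa [X_dvd_iff])

section AtZero

variable {K : Type*} [Field K]

/-- Near `X = 0` the three cases say `p / q = c X + O(X²)`, `d / X + O(1)`, `1 + e X + O(X²)`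
with `c, e ∉ {0, 1}` and `d ∉ {0, -1}`. -/
def LocalCondAtZero : ℕ → K[X] → K[X] → Prop
  | 0, p, q => p.coeff 0 = 0 ∧ q.coeff 0 ≠ 0 ∧ p.coeff 1 ≠ 0 ∧ p.coeff 1 ≠ q.coeff 0
  | 1, p, q => q.coeff 0 = 0 ∧ p.coeff 0 ≠ 0 ∧ q.coeff 1 ≠ 0 ∧ p.coeff 0 + q.coeff 1 ≠ 0
  | _, p, q => p.coeff 0 = q.coeff 0 ∧ p.coeff 0 ≠ 0 ∧ p.coeff 1 ≠ q.coeff 1 ∧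
      p.coeff 1 - q.coeff 1 ≠ q.coeff 0

theorem LocalCondAtZero.ne_zero {r : ℕ} {p q : K[X]} (h : LocalCondAtZero r p q) :
    p ≠ 0 ∧ q ≠ 0 := by
  rcases r with _ | _ | r <;> obtain ⟨h0, h1, h2, -⟩ := h <;>
    constructor <;> rintro rfl <;> simp_all

theorem localCondAtZero_one_of_zero [LinearOrder K] [IsStrictOrderedRing K] {p q : K[X]}
    (h : LocalCondAtZero 0 p q) :
    LocalCondAtZero 1 ((p.divX - q) * (p - q)) (X * p.divX ^ 2) := by
  obtain ⟨hp0, hq0, hp1, hpq⟩ := h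
  refine ⟨by simp, ?_, ?_, ?_⟩
  · simp [coeff_divX, hp0, hq0, sub_eq_zero, hpq]
  · simp [coeff_divX, pow_two, hp1]
  · simp only [mul_coeff_zero, coeff_sub, coeff_divX, hp0, coeff_X_mul, pow_two]
    convert sq_sub_mul_add_sq_ne_zero hq0 (a := p.coeff 1) using 1
    ring

theorem localCondAtZero_two_of_one {p q : K[X]} (h : LocalCondAtZero 1 p q) :
    LocalCondAtZero 2 ((p - X * q) * (p - q)) (p ^ 2) := by
  obtain ⟨hq0, hp0, hq1, hpq⟩ := h
  refine ⟨by simp [hq0, pow_two], by simp [hq0, hp0], ?_, ?_⟩ <;>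
    simp only [mul_coeff_one, mul_coeff_zero, pow_two, coeff_sub, coeff_X_zero, coeff_X_one, hq0]
  · intro h
    exact mul_ne_zero hp0 hq1 (by linear_combination -h)
  · intro h
    exact mul_ne_zero hp0 hpq (by linear_combination -h)

theorem localCondAtZero_zero_of_two {p q : K[X]} (h : LocalCondAtZero 2 p q) :
    LocalCondAtZero 0 ((p - X * q) * (p - q)) (p ^ 2) := by
  obtain ⟨hpq0, hp0, hpq1, hpq⟩ := h
  rw [← hpq0] at hpq
  refine ⟨by simp [hpq0], by simp [hp0, pow_two], ?_, ?_⟩ <;>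
    simp only [mul_coeff_one, mul_coeff_zero, pow_two, coeff_sub, coeff_X_zero, coeff_X_one,
      ← hpq0]
  · simpa [sub_eq_zero] using ⟨hp0, hpq1⟩
  · intro h
    exact mul_ne_zero hp0 (sub_ne_zero.mpr hpq) (by linear_combination h)

end AtZero

section AtInfinity

variable {K : Type*} [Field K]

def CondAtInfinity (r : ℕ) (p q : K[X]) : Prop :=
  p.natDegree = q.natDegree + r ∧ p.leadingCoeff ≠ q.leadingCoeff

theorem CondAtInfinity.leadingCoeff_sub_coeff_ne_zero {r : ℕ} {p q : K[X]}
    (h : CondAtInfinity r p q) : p.leadingCoeff - q.coeff p.natDegree ≠ 0 := by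
  obtain ⟨hdeg, hlc⟩ := h
  rcases r with _ | r
  · rw [hdeg, add_zero, coeff_natDegree]
    exact sub_ne_zero.mpr hlc
  · rw [coeff_eq_zero_of_natDegree_lt (by omega), sub_zero, leadingCoeff_ne_zero]
    rintro rfl
    simp at hdeg

theorem CondAtInfinity.natDegree_sub {r : ℕ} {p q : K[X]} (h : CondAtInfinity r p q) :
    (p - q).natDegree = p.natDegree :=
  natDegree_eq_of_le_of_coeff_ne_zero
    ((natDegree_sub_le_iff_left (by have := h.1; omega)).mpr le_rfl)
    (by rw [coeff_sub]; exact h.leadingCoeff_sub_coeff_ne_zero)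

theorem CondAtInfinity.leadingCoeff_sub {r : ℕ} {p q : K[X]} (h : CondAtInfinity r p q) :
    (p - q).leadingCoeff = p.leadingCoeff - q.coeff p.natDegree := by
  rw [leadingCoeff, h.natDegree_sub, coeff_sub, leadingCoeff]

theorem CondAtInfinity.natDegree_X_add_one_mul_sub_X_mul {r : ℕ} {p q : K[X]}
    (h : CondAtInfinity r p q) : ((X + 1) * p - X * q).natDegree = p.natDegree + 1 := by
  have hpq : p - q ≠ 0 := by
    rw [← leadingCoeff_ne_zero, h.leadingCoeff_sub]
    exact h.leadingCoeff_sub_coeff_ne_zero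
  rw [show (X + 1) * p - X * q = X * (p - q) + p by ring,
    natDegree_add_eq_left_of_natDegree_lt] <;> rw [natDegree_X_mul hpq, h.natDegree_sub]
  omega

theorem condAtInfinity_X_pow_mul_iff {r e : ℕ} {p q : K[X]} (hp : p ≠ 0) (hq : q ≠ 0) :
    CondAtInfinity r (X ^ e * p) (X ^ e * q) ↔ CondAtInfinity r p q := by
  simp only [CondAtInfinity, natDegree_X_pow_mul _ hp, natDegree_X_pow_mul _ hq, leadingCoeff_mul,
    leadingCoeff_X_pow, one_mul]
  rw [add_right_comm, add_left_inj]

theorem condAtInfinity_one_of_zero {p q : ℚ[X]} (hq : q ≠ 0) (h : CondAtInfinity 0 p q) :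
    CondAtInfinity 1 ((p - X * q) * (p - q)) (p ^ 2) := by
  have hXq : CondAtInfinity 1 (X * q) p := by
    refine ⟨by rw [natDegree_X_mul hq, h.1], ?_⟩
    simpa using h.2.symm
  have hA_deg : (p - X * q).natDegree = p.natDegree + 1 := by
    rw [← neg_sub, natDegree_neg, hXq.natDegree_sub, hXq.1]
  have hA_lc : (p - X * q).leadingCoeff = -q.leadingCoeff := by
    rw [← neg_sub, leadingCoeff_neg, hXq.leadingCoeff_sub, hXq.1,
      coeff_eq_zero_of_natDegree_lt (by omega)]
    simp
  have hB_lc : (p - q).leadingCoeff = p.leadingCoeff - q.leadingCoeff := by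
    rw [h.leadingCoeff_sub, h.1, add_zero, coeff_natDegree]
  have hq_lc : q.leadingCoeff ≠ 0 := leadingCoeff_ne_zero.mpr hq
  have hAB : (p - X * q).leadingCoeff * (p - q).leadingCoeff ≠ 0 := by
    rw [hA_lc, hB_lc]
    exact mul_ne_zero (neg_ne_zero.mpr hq_lc) (sub_ne_zero.mpr h.2)
  refine ⟨?_, ?_⟩
  · rw [natDegree_mul' hAB, hA_deg, h.natDegree_sub, natDegree_pow]
    ring
  · rw [leadingCoeff_mul, leadingCoeff_pow, hA_lc, hB_lc]
    intro heq
    exact Rat.sq_add_mul_sub_sq_ne_zero (a := p.leadingCoeff) hq_lc (by linear_combination -heq)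

theorem condAtInfinity_zero_of_one {p q : K[X]} (hq : q ≠ 0) (h : CondAtInfinity 1 p q) :
    CondAtInfinity 0 ((p - X * q) * (p - q)) (p ^ 2) := by
  have hXq : CondAtInfinity 0 p (X * q) := by
    refine ⟨by rw [natDegree_X_mul hq, h.1], ?_⟩
    simpa using h.2
  have hA_lc : (p - X * q).leadingCoeff = p.leadingCoeff - q.leadingCoeff := by
    rw [hXq.leadingCoeff_sub, hXq.1, add_zero, coeff_natDegree]
    simp
  have hB_lc : (p - q).leadingCoeff = p.leadingCoeff := by
    rw [h.leadingCoeff_sub, coeff_eq_zero_of_natDegree_lt (by have := h.1; omega), sub_zero]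
  have hp_lc : p.leadingCoeff ≠ 0 := by
    rw [leadingCoeff_ne_zero]
    rintro rfl
    simpa using h.1
  have hAB : (p - X * q).leadingCoeff * (p - q).leadingCoeff ≠ 0 := by
    rw [hA_lc, hB_lc]
    exact mul_ne_zero (sub_ne_zero.mpr h.2) hp_lc
  refine ⟨?_, ?_⟩
  · rw [natDegree_mul' hAB, hXq.natDegree_sub, h.natDegree_sub, natDegree_pow]
    ring
  · rw [leadingCoeff_mul, leadingCoeff_pow, hA_lc, hB_lc]
    intro heq
    exact mul_ne_zero (leadingCoeff_ne_zero.mpr hq) hp_lc (by linear_combination -heq)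

theorem CondAtInfinity.step {m : ℕ} {p q : ℚ[X]} (hq : q ≠ 0) (h : CondAtInfinity (m % 2) p q) :
    CondAtInfinity ((m + 1) % 2) ((p - X * q) * (p - q)) (p ^ 2) := by
  rcases Nat.mod_two_eq_zero_or_one m with hm | hm
  · rw [hm] at h
    rw [Nat.succ_mod_two_eq_one_iff.mpr hm]
    exact condAtInfinity_one_of_zero hq h
  · rw [hm] at h
    rw [Nat.succ_mod_two_eq_zero_iff.mpr hm]
    exact condAtInfinity_zero_of_one hq h

end AtInfinity

namespace F

mutual

/-- Coprime representatives `F m = p m / q m` (the paper's `p_m`, `q_m` up to a common scalar).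
When `3 ∣ m`, `X` divides `p m`, and the common factor `X` of the next pair is divided out. -/
noncomputable def p : ℕ → ℚ[X]
  | 0 => 2 * X
  | m + 1 =>
    if m % 3 = 0 then ((p m).divX - q m) * (p m - q m) else (p m - X * q m) * (p m - q m)

noncomputable def q : ℕ → ℚ[X]
  | 0 => X + 1
  | m + 1 => if m % 3 = 0 then X * (p m).divX ^ 2 else p m ^ 2

end

theorem localCondAtZero_p_q (m : ℕ) : LocalCondAtZero (m % 3) (p m) (q m) := by
  induction m with
  | zero => norm_num [LocalCondAtZero, p, q]
  | succ m ih =>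
    rcases (by omega : m % 3 = 0 ∨ m % 3 = 1 ∨ m % 3 = 2) with hm | hm | hm <;>
      rw [hm] at ih <;> simp only [p, q, hm]
    · rw [show (m + 1) % 3 = 1 by omega]
      exact localCondAtZero_one_of_zero ih
    · rw [show (m + 1) % 3 = 2 by omega]
      exact localCondAtZero_two_of_one ih
    · rw [show (m + 1) % 3 = 0 by omega]
      exact localCondAtZero_zero_of_two ih

theorem p_ne_zero (m : ℕ) : p m ≠ 0 := (localCondAtZero_p_q m).ne_zero.1

theorem q_ne_zero (m : ℕ) : q m ≠ 0 := (localCondAtZero_p_q m).ne_zero.2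

theorem X_mul_divX_p {m : ℕ} (hm : m % 3 = 0) : X * (p m).divX = p m := by
  have h0 : (p m).coeff 0 = 0 := by
    have h := localCondAtZero_p_q m
    rw [hm] at h
    exact h.1
  simpa [h0] using X_mul_divX_add (p m)

def cancelledX (m : ℕ) : ℕ := if m % 3 = 0 then 1 else 0

theorem X_pow_mul_p_succ (m : ℕ) :
    X ^ cancelledX m * p (m + 1) = (p m - X * q m) * (p m - q m) := by
  by_cases hm : m % 3 = 0
  · rw [cancelledX, p, if_pos hm, if_pos hm, pow_one]
    linear_combination (p m - q m) * X_mul_divX_p hm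
  · rw [cancelledX, p, if_neg hm, if_neg hm, pow_zero, one_mul]

theorem X_pow_mul_q_succ (m : ℕ) : X ^ cancelledX m * q (m + 1) = p m ^ 2 := by
  by_cases hm : m % 3 = 0
  · rw [cancelledX, q, if_pos hm, if_pos hm, pow_one]
    linear_combination (X * (p m).divX + p m) * X_mul_divX_p hm
  · rw [cancelledX, q, if_neg hm, if_neg hm, pow_zero, one_mul]

theorem eq_div (m : ℕ) :
    F m = algebraMap ℚ[X] (RatFunc ℚ) (p m) / algebraMap ℚ[X] (RatFunc ℚ) (q m) := by
  induction m with
  | zero => simp [F, p, q, map_ofNat]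
  | succ m ih =>
    have hp := RatFunc.algebraMap_ne_zero (p_ne_zero m)
    have hq := RatFunc.algebraMap_ne_zero (q_ne_zero m)
    have hX := RatFunc.algebraMap_ne_zero (pow_ne_zero (cancelledX m) (X_ne_zero (R := ℚ)))
    rw [F, ih, ← mul_div_mul_left (algebraMap _ _ (p (m + 1))) _ hX, ← map_mul, ← map_mul,
      X_pow_mul_p_succ, X_pow_mul_q_succ]
    simp only [map_mul, map_sub, map_pow, RatFunc.algebraMap_X]
    field_simp

theorem isCoprime_p_q (m : ℕ) : IsCoprime (p m) (q m) := by
  induction m with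
  | zero =>
    have h2 : IsUnit (2 : ℚ[X]) := isUnit_C.mpr (by norm_num : IsUnit (2 : ℚ))
    rw [p, q, isCoprime_mul_unit_left_left h2]
    exact IsCoprime.add_one_right_of_dvd dvd_rfl
  | succ m ih =>
    have hloc := localCondAtZero_p_q m
    by_cases hm : m % 3 = 0
    · rw [hm] at hloc
      obtain ⟨hp0, hq0, -, hpq⟩ := hloc
      rw [p, q, if_pos hm, if_pos hm]
      refine isCoprime_sub_mul_sub_of_eq_mul (X_mul_divX_p hm).symm ih ?_ ?_ <;>
        refine (isCoprime_X_of_coeff_zero_ne_zero ?_).symm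
      · simpa [coeff_divX, sub_eq_zero] using hpq
      · simpa [hp0] using hq0
    · have hp0 : (p m).coeff 0 ≠ 0 := by
        rcases (by omega : m % 3 = 1 ∨ m % 3 = 2) with h | h <;> rw [h] at hloc
        exacts [hloc.2.1, hloc.2.1]
      rw [p, q, if_neg hm, if_neg hm]
      exact isCoprime_sub_mul_mul_sub_sq ih (isCoprime_X_of_coeff_zero_ne_zero hp0)

theorem condAtInfinity_p_q (m : ℕ) : CondAtInfinity (m % 2) (p m) (q m) := by
  induction m with
  | zero =>
    rw [p, q, CondAtInfinity, ← C_1, natDegree_X_add_C, leadingCoeff_X_add_C, ← map_ofNat C 2,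
      natDegree_C_mul_X _ two_ne_zero, leadingCoeff_C_mul_X]
    norm_num
  | succ m ih =>
    have h := ih.step (q_ne_zero m)
    rwa [← X_pow_mul_p_succ, ← X_pow_mul_q_succ,
      condAtInfinity_X_pow_mul_iff (p_ne_zero _) (q_ne_zero _)] at h

theorem natDegree_p_succ (m : ℕ) :
    (p (m + 1)).natDegree + cancelledX m + m % 2 = 2 * (p m).natDegree + 1 := by
  have h := ((condAtInfinity_p_q m).step (q_ne_zero m)).1
  rw [← X_pow_mul_p_succ, natDegree_X_pow_mul _ (p_ne_zero _), natDegree_pow] at h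
  have := (condAtInfinity_p_q m).1
  omega

def correction (m : ℕ) : ℤ :=
  if m % 6 = 0 then 19 else if m % 6 = 1 then 17 else if m % 6 = 2 then 13
    else if m % 6 = 3 then 26 else if m % 6 = 4 then 10 else 20

theorem correction_succ (m : ℕ) :
    correction (m + 1) = 2 * correction m - 21 * ((cancelledX m + m % 2 : ℕ) : ℤ) := by
  unfold correction cancelledX
  split_ifs <;> omega

theorem natDegree_p_add_one (m : ℕ) :
    21 * ((p m).natDegree + 1 : ℤ) = 23 * 2 ^ m + correction m := by
  induction m with
  | zero =>
    rw [p, ← map_ofNat C 2, natDegree_C_mul_X _ two_ne_zero]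
    norm_num [correction]
  | succ m ih =>
    have h : ((p (m + 1)).natDegree : ℤ) + ((cancelledX m + m % 2 : ℕ) : ℤ) =
        2 * (p m).natDegree + 1 := by
      have := natDegree_p_succ m
      omega
    rw [correction_succ, pow_succ]
    linear_combination 2 * ih + 21 * h

end F

theorem degree_X_add_one_mul_num_sub_X_mul_denom (m : ℕ) :
    21 * ((((Polynomial.X + 1) * (F m).num - Polynomial.X * (F m).denom).natDegree : ℤ)) =
      23 * 2 ^ m +
        (if m % 6 = 0 then 19 else if m % 6 = 1 then 17 else if m % 6 = 2 then 13
          else if m % 6 = 3 then 26 else if m % 6 = 4 then 10 else 20) := by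
  have hq := F.q_ne_zero m
  have hrep : (X + 1) * (F m).num - X * (F m).denom =
      C (F.q m).leadingCoeff⁻¹ * ((X + 1) * F.p m - X * F.q m) := by
    rw [F.eq_div, RatFunc.num_div_eq_of_isCoprime (F.isCoprime_p_q m),
      RatFunc.denom_div_eq_of_isCoprime hq (F.isCoprime_p_q m)]
    ring
  rw [hrep, natDegree_C_mul (inv_ne_zero (leadingCoeff_ne_zero.mpr hq)),
    (F.condAtInfinity_p_q m).natDegree_X_add_one_mul_sub_X_mul]
  push_cast
  exact F.natDegree_p_add_one m
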